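/- Let p be a prime and R a commutative ring in which p = 0 (an 𝔽_p-algebra). Let f ∈ R[[X]] be a formal power series with f(0) = 0 which is additive, i.e. f(X+Y) = f(X) + f(Y) in R[[X,Y]]. Then the coefficient of X^k in f vanishes unless k is a power of p; equivalently f = Σ_{i ≥ 0} a_i X^{p^i} for suitable a_i ∈ R. -/

import Mathlib

/-!
Comparing coefficients of `X^i Y^(k-i)` in `f(X+Y) = f(X) + f(Y)` gives `choose k i • a_k = 0`
for `0 < i < k`, and the constant term gives `a_0 = 2 a_0`. If `k > 0` is not a power of `p`,
then by Lucas's theorem some `choose k i` with `0 < i < k` is prime to `p`, hence a unit in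
the `𝔽_p`-algebra `R`, so `a_k = 0`.
-/

open PowerSeries

/-- The substitution `f(X+Y)` of `X+Y` into a one-variable power series `f`, as a formal
power series in two variables.  Since `(X+Y)^k` is homogeneous of degree `k`, its coefficient
at a monomial `m` is `(coeff f (|m|)) · (coeff m ((X+Y)^{|m|}))`. -/
noncomputable def substXY {R : Type*} [CommRing R] (f : PowerSeries R) :
    MvPowerSeries (Fin 2) R := fun m =>
  PowerSeries.coeff (m 0 + m 1) f *
    MvPowerSeries.coeff m ((MvPowerSeries.X 0 + MvPowerSeries.X 1) ^ (m 0 + m 1))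

/-- The substitution `f(X_i)` of the variable `X_i` (`i = 0, 1`) into a one-variable power
series `f`, as a formal power series in two variables. -/
noncomputable def substVar {R : Type*} [CommRing R] (i : Fin 2) (f : PowerSeries R) :
    MvPowerSeries (Fin 2) R := fun m =>
  PowerSeries.coeff (m 0 + m 1) f *
    MvPowerSeries.coeff m ((MvPowerSeries.X i : MvPowerSeries (Fin 2) R) ^ (m 0 + m 1))

lemma isUnit_natCast_of_not_dvd {R : Type*} [CommRing R] {p n : ℕ} (hp : p.Prime)
    (hchar : (p : R) = 0) (hn : ¬ p ∣ n) : IsUnit (n : R) := by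
  have h :=
    (Nat.isCoprime_iff_coprime.mpr (hp.coprime_iff_not_dvd.mpr hn)).map (Int.castRingHom R)
  rwa [map_natCast, map_natCast, hchar, isCoprime_zero_left] at h

section Additive

variable {R : Type*} [CommRing R] (f : PowerSeries R)

lemma coeff_substXY (d : Fin 2 →₀ ℕ) :
    MvPowerSeries.coeff d (substXY f) = coeff (d 0 + d 1) f * (d 0 + d 1).choose (d 0) := by
  have h := MvPolynomial.coeff_add_pow (R := R) d (d 0 + d 1)
  rw [if_pos (by simp)] at h
  rw [MvPowerSeries.coeff_apply, substXY, ← h, ← MvPolynomial.coeff_coe, MvPolynomial.coe_pow,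
    MvPolynomial.coe_add, MvPolynomial.coe_X, MvPolynomial.coe_X]

lemma coeff_substVar_zero (d : Fin 2 →₀ ℕ) :
    MvPowerSeries.coeff d (substVar 0 f) = if d 1 = 0 then coeff (d 0) f else 0 := by
  have hd : d = Finsupp.single 0 (d 0 + d 1) ↔ d 1 = 0 := by
    simp [Finsupp.ext_iff, Fin.forall_fin_two]
  rw [MvPowerSeries.coeff_apply, substVar, MvPowerSeries.coeff_X_pow]
  simp only [hd]
  split_ifs with h <;> simp [h]

lemma coeff_substVar_one (d : Fin 2 →₀ ℕ) :
    MvPowerSeries.coeff d (substVar 1 f) = if d 0 = 0 then coeff (d 1) f else 0 := by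
  have hd : d = Finsupp.single 1 (d 0 + d 1) ↔ d 0 = 0 := by
    simp [Finsupp.ext_iff, Fin.forall_fin_two]
  rw [MvPowerSeries.coeff_apply, substVar, MvPowerSeries.coeff_X_pow]
  simp only [hd]
  split_ifs with h <;> simp [h]

variable {f}

lemma constantCoeff_eq_zero_of_substXY_eq (hadd : substXY f = substVar 0 f + substVar 1 f) :
    constantCoeff f = 0 := by
  have h := congrArg (MvPowerSeries.coeff 0) hadd
  rw [map_add, coeff_substXY, coeff_substVar_zero, coeff_substVar_one] at h
  simpa using h

lemma coeff_mul_choose_eq_zero_of_substXY_eq (hadd : substXY f = substVar 0 f + substVar 1 f)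
    {k i : ℕ} (hi : 0 < i) (hik : i < k) :
    coeff k f * k.choose i = 0 := by
  obtain ⟨j, rfl⟩ : ∃ j, k = i + j := ⟨k - i, by omega⟩
  have hj : j ≠ 0 := by omega
  have h := congrArg (MvPowerSeries.coeff (Finsupp.single 0 i + Finsupp.single 1 j)) hadd
  simpa [coeff_substXY, coeff_substVar_zero, coeff_substVar_one, hi.ne', hj] using h

end Additive

theorem additive_powerSeries_coeff_eq_zero_of_not_pow_general
    {p : ℕ} (hp : p.Prime) {R : Type*} [CommRing R] (hchar : (p : R) = 0)
    (f : PowerSeries R)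
    (hadd : substXY f = substVar 0 f + substVar 1 f)
    (k : ℕ) (hk : ¬ ∃ i : ℕ, k = p ^ i) :
    PowerSeries.coeff k f = 0 := by
  have : Fact p.Prime := ⟨hp⟩
  rcases Nat.eq_zero_or_pos k with rfl | hk0
  · simpa using constantCoeff_eq_zero_of_substXY_eq hadd
  by_contra hfk
  refine hk ⟨_, Choose.eq_pow_multiplicity_of_choose_modEq_zero_nat hk0 fun i hi => ?_⟩
  rw [Finset.mem_Icc] at hi
  rw [Nat.modEq_zero_iff_dvd]
  by_contra hpi
  have hunit : IsUnit (k.choose i : R) := isUnit_natCast_of_not_dvd hp hchar hpi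
  exact hfk (hunit.mul_left_eq_zero.mp
    (coeff_mul_choose_eq_zero_of_substXY_eq hadd (by omega) (by omega)))

/-- Over an `𝔽_p`-algebra `R`, an additive power series `f` (with `f(0) = 0` and
`f(X+Y) = f(X) + f(Y)`) has `coeff k f = 0` unless `k` is a power of `p`;
equivalently `f = Σ_{i≥0} a_i X^{p^i}`. -/
theorem additive_powerSeries_coeff_eq_zero_of_not_pow
    {p : ℕ} (hp : p.Prime) {R : Type*} [CommRing R] (hchar : (p : R) = 0)
    (f : PowerSeries R) (h0 : PowerSeries.constantCoeff f = 0)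
    (hadd : substXY f = substVar 0 f + substVar 1 f)
    (k : ℕ) (hk : ¬ ∃ i : ℕ, k = p ^ i) :
    PowerSeries.coeff k f = 0 :=
  additive_powerSeries_coeff_eq_zero_of_not_pow_general hp hchar f hadd k hk
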